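/- Let u, v : ℝ³ → ℝ be smooth functions of (x, y, t) satisfying the Manakov–Santini system P(u) + u_x² = 0, P(v) = 0, where P = ∂_x∂_t − ∂_y² + (u − v_y)∂_x² + v_x ∂_x∂_y. Set a := v_x and b := u − v_y, and define Φ : ℝ⁴ → ℝ⁴ by Φ(x, y, t, μ) = (x, y, t, μ + v_x(x,y,t)). Let X̃₁ = ∂_y − (μ + v_x)∂_x − u_x ∂_μ and X̃₂ = ∂_t − (μ² + v_x μ − u + v_y)∂_x − (u_x μ + u_y)∂_μ be the Manakov–Santini Lax fields on ℝ⁴ with coordinates (x,y,t,μ), and let X₁ = ∂_t − (λ² − aλ − b)∂_x + m ∂_λ, X₂ = ∂_y − λ∂_x + n ∂_λ with m = −a_x λ² + (a a_x − a_y − b_x)λ + (a b_x − b_y), n = −a_x λ − b_x be the (MS2) Lax fields on ℝ⁴ with coordinates (x,y,t,λ). Then for every p ∈ ℝ⁴ one has DΦ(p)(X̃₁(p)) = X₂(Φ(p)) and DΦ(p)(X̃₂(p)) = X₁(Φ(p)), i.e. Φ pushes the Manakov–Santini Lax pair forward to the (MS2) Lax pair. -/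

import Mathlib

noncomputable section

/-- Partial derivative of `f` along the `i`-th coordinate direction on `ℝⁿ`.
Coordinates on `ℝ³` are `(x, y, t) = (0, 1, 2)`; on `ℝ⁴` the last coordinate
is the spectral parameter. -/
def pd {n : ℕ} (i : Fin n) (f : (Fin n → ℝ) → ℝ) : (Fin n → ℝ) → ℝ :=
  fun x => fderiv ℝ f x (Pi.single i 1)

/-- Projection `(x, y, t, ·) ↦ (x, y, t)`. -/
def π3 (p : Fin 4 → ℝ) : Fin 3 → ℝ := ![p 0, p 1, p 2]

/-- Manakov–Santini Lax field `X̃₁ = ∂_y − (μ + v_x)∂_x − u_x ∂_μ`. -/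
def msLax1 (u v : (Fin 3 → ℝ) → ℝ) : (Fin 4 → ℝ) → (Fin 4 → ℝ) :=
  fun p => ![-(p 3 + pd 0 v (π3 p)), 1, 0, -(pd 0 u (π3 p))]

/-- Manakov–Santini Lax field `X̃₂ = ∂_t − (μ² + v_x μ − u + v_y)∂_x − (u_x μ + u_y)∂_μ`. -/
def msLax2 (u v : (Fin 3 → ℝ) → ℝ) : (Fin 4 → ℝ) → (Fin 4 → ℝ) :=
  fun p =>
    ![-((p 3) ^ 2 + pd 0 v (π3 p) * p 3 - u (π3 p) + pd 1 v (π3 p)), 0, 1,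
      -(pd 0 u (π3 p) * p 3 + pd 1 u (π3 p))]

/-- (MS2) Lax field `X₁ = ∂_t − (λ² − aλ − b)∂_x + m ∂_λ` with
`m = −a_x λ² + (a a_x − a_y − b_x)λ + (a b_x − b_y)`. -/
def ms2Lax1 (a b : (Fin 3 → ℝ) → ℝ) : (Fin 4 → ℝ) → (Fin 4 → ℝ) :=
  fun p =>
    ![-((p 3) ^ 2 - a (π3 p) * p 3 - b (π3 p)), 0, 1,
      -(pd 0 a (π3 p)) * (p 3) ^ 2
        + (a (π3 p) * pd 0 a (π3 p) - pd 1 a (π3 p) - pd 0 b (π3 p)) * p 3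
        + (a (π3 p) * pd 0 b (π3 p) - pd 1 b (π3 p))]

/-- (MS2) Lax field `X₂ = ∂_y − λ∂_x + n ∂_λ` with `n = −a_x λ − b_x`. -/
def ms2Lax2 (a b : (Fin 3 → ℝ) → ℝ) : (Fin 4 → ℝ) → (Fin 4 → ℝ) :=
  fun p => ![-(p 3), 1, 0, -(pd 0 a (π3 p)) * p 3 - pd 0 b (π3 p)]

/-- The change of variables `Φ(x, y, t, μ) = (x, y, t, μ + v_x)`. -/
def Phi (v : (Fin 3 → ℝ) → ℝ) : (Fin 4 → ℝ) → (Fin 4 → ℝ) :=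
  fun p => ![p 0, p 1, p 2, p 3 + pd 0 v (π3 p)]

/-!
`Φ` fixes `(x, y, t)` and shifts the spectral parameter by `v_x`, so `DΦ(p)` keeps the first
three components of a vector and adds to the last one the derivative of `v_x` along the
`(x, y, t)`-part. Comparing components with `a = v_x`, `b = u − v_y`, all of them agree
identically by the symmetry of second partial derivatives of `v`, except the `∂_λ`-component of
`X₁`, whose discrepancy is exactly `P(v)`.
-/

section PartialDerivative

variable {n : ℕ} {f g : (Fin n → ℝ) → ℝ}

theorem fderiv_apply_eq_sum_pd (x w : Fin n → ℝ) :
    fderiv ℝ f x w = ∑ i, w i * pd i f x := by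
  conv_lhs => rw [← Finset.univ_sum_single w]
  simp only [map_sum, pd]
  congr! with i
  rw [← smul_eq_mul, ← map_smul, ← Pi.single_smul', smul_eq_mul, mul_one]

theorem pd_sub (i : Fin n) {x : Fin n → ℝ} (hf : DifferentiableAt ℝ f x)
    (hg : DifferentiableAt ℝ g x) :
    pd i (fun y => f y - g y) x = pd i f x - pd i g x := by
  simp [pd, fderiv_fun_sub hf hg]

theorem ContDiff.differentiable_pd (hf : ContDiff ℝ 2 f) (i : Fin n) :
    Differentiable ℝ (pd i f) :=
  ((hf.fderiv_right one_add_one_eq_two.le).clm_apply contDiff_const).differentiable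
    one_ne_zero

theorem ContDiff.pd_comm (hf : ContDiff ℝ 2 f) (i j : Fin n) (x : Fin n → ℝ) :
    pd i (pd j f) x = pd j (pd i f) x := by
  have hdf : Differentiable ℝ (fderiv ℝ f) :=
    (hf.fderiv_right one_add_one_eq_two.le).differentiable one_ne_zero
  have hpd (k l : Fin n) :
      pd k (pd l f) x = fderiv ℝ (fderiv ℝ f) x (Pi.single k 1) (Pi.single l 1) := by
    change fderiv ℝ (fun y => fderiv ℝ f y (Pi.single l 1)) x (Pi.single k 1) = _
    simp [fderiv_clm_apply (hdf x) (differentiableAt_const _)]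
  rw [hpd, hpd, (hf.contDiffAt.isSymmSndFDerivAt (by simp)).eq]

end PartialDerivative

theorem π3_Phi (v : (Fin 3 → ℝ) → ℝ) (p : Fin 4 → ℝ) : π3 (Phi v p) = π3 p := by
  funext i; fin_cases i <;> rfl

def π3CLM : (Fin 4 → ℝ) →L[ℝ] (Fin 3 → ℝ) :=
  ContinuousLinearMap.pi fun i => ContinuousLinearMap.proj (Fin.castSucc i)

theorem π3CLM_apply (p : Fin 4 → ℝ) : π3CLM p = π3 p := by
  funext i; fin_cases i <;> rfl

theorem fderiv_Phi_apply {v : (Fin 3 → ℝ) → ℝ} {p : Fin 4 → ℝ}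
    (hv : DifferentiableAt ℝ (pd 0 v) (π3 p)) (h : Fin 4 → ℝ) :
    fderiv ℝ (Phi v) p h = h + fderiv ℝ (pd 0 v) (π3 p) (π3 h) • Pi.single 3 1 := by
  have hPhi : Phi v = fun q => q + pd 0 v (π3CLM q) • (Pi.single 3 1 : Fin 4 → ℝ) := by
    funext q i
    fin_cases i <;> simp [Phi, π3CLM_apply]
  have hcomp : HasFDerivAt (fun q => pd 0 v (π3CLM q))
      ((fderiv ℝ (pd 0 v) (π3CLM p)).comp π3CLM) p := by
    rw [← π3CLM_apply] at hv
    exact hv.hasFDerivAt.comp p π3CLM.hasFDerivAt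
  have hd : HasFDerivAt (fun q => q + pd 0 v (π3CLM q) • (Pi.single 3 1 : Fin 4 → ℝ)) _ p :=
    (hasFDerivAt_id p).add (hcomp.smul_const _)
  rw [hPhi, hd.fderiv]
  simp [π3CLM_apply]

section LaxPair

variable {u v : (Fin 3 → ℝ) → ℝ}

theorem fderiv_Phi_msLax1 (hu : Differentiable ℝ u) (hv : ContDiff ℝ 2 v) (p : Fin 4 → ℝ) :
    fderiv ℝ (Phi v) p (msLax1 u v p)
      = ms2Lax2 (pd 0 v) (fun x => u x - pd 1 v x) (Phi v p) := by
  rw [fderiv_Phi_apply (hv.differentiable_pd 0 _), fderiv_apply_eq_sum_pd, Fin.sum_univ_three,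
    ms2Lax2, π3_Phi, pd_sub 0 (hu _) (hv.differentiable_pd 1 _), hv.pd_comm 1 0]
  funext i
  fin_cases i <;> simp [msLax1, Phi, π3]
  ring

theorem fderiv_Phi_msLax2 (hu : Differentiable ℝ u) (hv : ContDiff ℝ 2 v)
    (hMSv : ∀ x : Fin 3 → ℝ,
      pd 0 (pd 2 v) x - pd 1 (pd 1 v) x + (u x - pd 1 v x) * pd 0 (pd 0 v) x
        + pd 0 v x * pd 0 (pd 1 v) x = 0)
    (p : Fin 4 → ℝ) :
    fderiv ℝ (Phi v) p (msLax2 u v p)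
      = ms2Lax1 (pd 0 v) (fun x => u x - pd 1 v x) (Phi v p) := by
  rw [fderiv_Phi_apply (hv.differentiable_pd 0 _), fderiv_apply_eq_sum_pd, Fin.sum_univ_three,
    ms2Lax1, π3_Phi, pd_sub 0 (hu _) (hv.differentiable_pd 1 _),
    pd_sub 1 (hu _) (hv.differentiable_pd 1 _), hv.pd_comm 1 0, hv.pd_comm 2 0]
  funext i
  fin_cases i <;> simp [msLax2, Phi, π3]
  · ring
  · linear_combination hMSv ![p 0, p 1, p 2]

end LaxPair

theorem ms_lax_pushes_to_MS2_lax_general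
    (u v : (Fin 3 → ℝ) → ℝ)
    (hu : ContDiff ℝ (⊤ : ℕ∞) u)
    (hv : ContDiff ℝ (⊤ : ℕ∞) v)
    (hMSv : ∀ x : Fin 3 → ℝ,
      pd 0 (pd 2 v) x - pd 1 (pd 1 v) x + (u x - pd 1 v x) * pd 0 (pd 0 v) x
        + pd 0 v x * pd 0 (pd 1 v) x = 0) :
    ∀ p : Fin 4 → ℝ,
      fderiv ℝ (Phi v) p (msLax1 u v p)
        = ms2Lax2 (pd 0 v) (fun x => u x - pd 1 v x) (Phi v p) ∧
      fderiv ℝ (Phi v) p (msLax2 u v p)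
        = ms2Lax1 (pd 0 v) (fun x => u x - pd 1 v x) (Phi v p) := by
  have hu' : Differentiable ℝ u := hu.differentiable (by simp)
  have hv' : ContDiff ℝ 2 v := hv.of_le (WithTop.coe_le_coe.mpr le_top)
  exact fun p => ⟨fderiv_Phi_msLax1 hu' hv' p, fderiv_Phi_msLax2 hu' hv' hMSv p⟩

/-- If `(u, v)` solves the Manakov–Santini system, then the diffeomorphism
`Φ(x,y,t,μ) = (x,y,t,μ + v_x)` pushes the Manakov–Santini Lax pair forward to the
(MS2) Lax pair with `a = v_x`, `b = u − v_y`: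
`DΦ(p)(X̃₁(p)) = X₂(Φ(p))` and `DΦ(p)(X̃₂(p)) = X₁(Φ(p))`. -/
theorem ms_lax_pushes_to_MS2_lax
    (u v : (Fin 3 → ℝ) → ℝ)
    (hu : ContDiff ℝ (⊤ : ℕ∞) u)
    (hv : ContDiff ℝ (⊤ : ℕ∞) v)
    (hMSu : ∀ x : Fin 3 → ℝ,
      pd 0 (pd 2 u) x - pd 1 (pd 1 u) x + (u x - pd 1 v x) * pd 0 (pd 0 u) x
        + pd 0 v x * pd 0 (pd 1 u) x + (pd 0 u x) ^ 2 = 0)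
    (hMSv : ∀ x : Fin 3 → ℝ,
      pd 0 (pd 2 v) x - pd 1 (pd 1 v) x + (u x - pd 1 v x) * pd 0 (pd 0 v) x
        + pd 0 v x * pd 0 (pd 1 v) x = 0) :
    ∀ p : Fin 4 → ℝ,
      fderiv ℝ (Phi v) p (msLax1 u v p)
        = ms2Lax2 (pd 0 v) (fun x => u x - pd 1 v x) (Phi v p) ∧
      fderiv ℝ (Phi v) p (msLax2 u v p)
        = ms2Lax1 (pd 0 v) (fun x => u x - pd 1 v x) (Phi v p) :=
  ms_lax_pushes_to_MS2_lax_general u v hu hv hMSv
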